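/- Let s ↦ Λ(s) be a differentiable family of unit vectors in ℂ² ⊗ H, ρ(s) = tr_H |Λ(s)⟩⟨Λ(s)| the reduced density matrix on ℂ², and 𝔄(s) ∈ M₂(ℂ) any operator-valued function satisfying 𝔄 ρ = −i tr_H |Λ'⟩⟨Λ|. If u(s) ∈ M₂(ℂ) solves u' = −i u 𝔄 with u(0) = id, then u(s) ρ(s) u(s)† = ρ(0) for all s; in particular tr(ρ(s) u(s)† u(s)) = 1, i.e. u(s) is 'almost surely unitary' with respect to ρ(s). -/

import Mathlib

/-!
Differentiating `ρ = tr_H |Λ⟩⟨Λ|` gives `ρ' = tr_H |Λ'⟩⟨Λ| + (tr_H |Λ'⟩⟨Λ|)† = i 𝔄 ρ - i ρ 𝔄†`,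
and together with `u' = -i u 𝔄` every term of `(u ρ u†)'` cancels, so `u ρ u†` stays equal to
`ρ(0)`. Cyclicity of the trace then gives `tr (ρ u† u) = tr ρ(0) = ‖Λ(0)‖² = 1`.
-/

open Matrix

noncomputable section

variable {H : Type*} [NormedAddCommGroup H] [InnerProductSpace ℂ H] [CompleteSpace H]

/-- Partial trace over H of the rank-one operator |Φ⟩⟨Ψ| on ℂ² ⊗ H ≅ H ⊕ H:
(tr_H |Φ⟩⟨Ψ|)_{jk} = ⟨Ψ_k | Φ_j⟩. -/
def PT (Φ Ψ : PiLp 2 fun _ : Fin 2 => H) : Matrix (Fin 2) (Fin 2) ℂ :=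
  Matrix.of fun j k => (inner ℂ (Ψ k) (Φ j) : ℂ)

section EntrywiseDerivative

variable {l m n : Type*}

/-- `Matrix` carries no global norm, so derivatives of matrix-valued functions are taken entry by
entry. -/
def HasEntrywiseDerivAt (A : ℝ → Matrix m n ℂ) (A' : Matrix m n ℂ) (s : ℝ) : Prop :=
  ∀ i j, HasDerivAt (fun t => A t i j) (A' i j) s

namespace HasEntrywiseDerivAt

variable {s : ℝ}

theorem mul [Fintype m] {A : ℝ → Matrix l m ℂ} {B : ℝ → Matrix m n ℂ} {A' : Matrix l m ℂ}
    {B' : Matrix m n ℂ} (hA : HasEntrywiseDerivAt A A' s) (hB : HasEntrywiseDerivAt B B' s) :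
    HasEntrywiseDerivAt (fun t => A t * B t) (A' * B s + A s * B') s := by
  intro i k
  simp only [mul_apply, Matrix.add_apply, ← Finset.sum_add_distrib]
  exact HasDerivAt.fun_sum fun j _ => (hA i j).fun_mul (hB j k)

theorem conjTranspose {A : ℝ → Matrix m n ℂ} {A' : Matrix m n ℂ}
    (hA : HasEntrywiseDerivAt A A' s) : HasEntrywiseDerivAt (fun t => (A t)ᴴ) A'ᴴ s :=
  fun i j => (hA j i).star

theorem mul_mul_conjTranspose [Fintype n] {u : ℝ → Matrix m n ℂ} {ρ : ℝ → Matrix n n ℂ}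
    {u' : Matrix m n ℂ} {ρ' : Matrix n n ℂ}
    (hu : HasEntrywiseDerivAt u u' s) (hρ : HasEntrywiseDerivAt ρ ρ' s) :
    HasEntrywiseDerivAt (fun t => u t * ρ t * (u t)ᴴ)
      ((u' * ρ s + u s * ρ') * (u s)ᴴ + u s * ρ s * u'ᴴ) s :=
  (hu.mul hρ).mul hu.conjTranspose

end HasEntrywiseDerivAt

theorem eq_of_hasEntrywiseDerivAt_zero {A : ℝ → Matrix m n ℂ}
    (hA : ∀ s, HasEntrywiseDerivAt A 0 s) (s t : ℝ) : A s = A t := by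
  ext i j
  exact is_const_of_deriv_eq_zero (fun r => (hA r i j).differentiableAt)
    (fun r => (hA r i j).deriv) s t

end EntrywiseDerivative

theorem mul_mul_conjTranspose_eq_of_hasEntrywiseDerivAt {n : Type*} [Fintype n]
    {u ρ 𝔄 : ℝ → Matrix n n ℂ}
    (hu : ∀ s, HasEntrywiseDerivAt u (-Complex.I • (u s * 𝔄 s)) s)
    (hρ : ∀ s, HasEntrywiseDerivAt ρ (Complex.I • (𝔄 s * ρ s) - Complex.I • (ρ s * (𝔄 s)ᴴ)) s)
    (s t : ℝ) : u s * ρ s * (u s)ᴴ = u t * ρ t * (u t)ᴴ := by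
  refine eq_of_hasEntrywiseDerivAt_zero (A := fun r => u r * ρ r * (u r)ᴴ) (fun r => ?_) s t
  convert (hu r).mul_mul_conjTranspose (hρ r) using 1
  simp only [conjTranspose_smul, conjTranspose_mul, Complex.star_def, map_neg, Complex.conj_I,
    neg_neg, Matrix.smul_mul, Matrix.mul_smul, Matrix.add_mul, Matrix.sub_mul, Matrix.mul_sub,
    Matrix.mul_assoc]
  module

omit [CompleteSpace H] in
theorem PT_conjTranspose (Φ Ψ : PiLp 2 fun _ : Fin 2 => H) : (PT Φ Ψ)ᴴ = PT Ψ Φ := by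
  ext j k
  simp [PT, conjTranspose_apply]

omit [CompleteSpace H] in
theorem trace_PT_self (Φ : PiLp 2 fun _ : Fin 2 => H) : (PT Φ Φ).trace = (‖Φ‖ ^ 2 : ℝ) := by
  simp [PT, trace, PiLp.norm_sq_eq_of_L2, inner_self_eq_norm_sq_to_K]

omit [CompleteSpace H] in
theorem hasEntrywiseDerivAt_PT {Φ Ψ : ℝ → PiLp 2 fun _ : Fin 2 => H}
    {Φ' Ψ' : PiLp 2 fun _ : Fin 2 => H} {s : ℝ}
    (hΦ : HasDerivAt Φ Φ' s) (hΨ : HasDerivAt Ψ Ψ' s) :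
    HasEntrywiseDerivAt (fun t => PT (Φ t) (Ψ t)) (PT Φ' (Ψ s) + PT (Φ s) Ψ') s := by
  have hcomp {Χ : ℝ → PiLp 2 fun _ : Fin 2 => H} {Χ'} (h : HasDerivAt Χ Χ' s) (i : Fin 2) :
      HasDerivAt (fun t => Χ t i) (Χ' i) s :=
    (PiLp.hasFDerivAt_apply 2 (Χ s) i).comp_hasDerivAt s h
  intro j k
  simpa [PT, add_comm] using (hcomp hΨ k).inner ℂ (hcomp hΦ j)

omit [CompleteSpace H] in
theorem hasEntrywiseDerivAt_PT_self {Λ : ℝ → PiLp 2 fun _ : Fin 2 => H}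
    {Λ' : PiLp 2 fun _ : Fin 2 => H} {A : Matrix (Fin 2) (Fin 2) ℂ} {s : ℝ}
    (hΛ : HasDerivAt Λ Λ' s) (hA : A * PT (Λ s) (Λ s) = -Complex.I • PT Λ' (Λ s)) :
    HasEntrywiseDerivAt (fun t => PT (Λ t) (Λ t))
      (Complex.I • (A * PT (Λ s) (Λ s)) - Complex.I • (PT (Λ s) (Λ s) * Aᴴ)) s := by
  have hout : PT Λ' (Λ s) = Complex.I • (A * PT (Λ s) (Λ s)) := by
    rw [hA, smul_smul]
    simp
  have hin : PT (Λ s) Λ' = -Complex.I • (PT (Λ s) (Λ s) * Aᴴ) := by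
    rw [← PT_conjTranspose, hout, conjTranspose_smul, conjTranspose_mul, PT_conjTranspose]
    simp
  simpa [hout, hin, sub_eq_add_neg] using hasEntrywiseDerivAt_PT hΛ hΛ

/-- For a differentiable family of unit vectors Λ(s) in ℂ² ⊗ H with reduced
density matrix ρ(s) = tr_H|Λ(s)⟩⟨Λ(s)|, if 𝔄(s) satisfies 𝔄ρ = −i tr_H|Λ'⟩⟨Λ| and u(s)
solves u' = −i u 𝔄 with u(0) = id, then u(s)ρ(s)u(s)† = ρ(0) for all s; in particular
tr(ρ(s) u(s)† u(s)) = 1, i.e. u(s) is almost surely unitary with respect to ρ(s). -/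
theorem stmt14 (Λ Λd : ℝ → PiLp 2 fun _ : Fin 2 => H)
    (hΛ : ∀ s, HasDerivAt Λ (Λd s) s) (hnorm : ∀ s, ‖Λ s‖ = 1)
    (𝔄 u : ℝ → Matrix (Fin 2) (Fin 2) ℂ)
    (h𝔄 : ∀ s, 𝔄 s * PT (Λ s) (Λ s) = (-Complex.I) • PT (Λd s) (Λ s))
    (hu0 : u 0 = 1)
    (hu : ∀ s j k, HasDerivAt (fun s' => u s' j k) (((-Complex.I) • (u s * 𝔄 s)) j k) s) :
    ∀ s : ℝ,
      u s * PT (Λ s) (Λ s) * (u s)ᴴ = PT (Λ 0) (Λ 0) ∧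
      Matrix.trace (PT (Λ s) (Λ s) * ((u s)ᴴ * u s)) = 1 := by
  intro s
  have hconj : u s * PT (Λ s) (Λ s) * (u s)ᴴ = PT (Λ 0) (Λ 0) := by
    simpa [hu0] using mul_mul_conjTranspose_eq_of_hasEntrywiseDerivAt hu
      (fun r => hasEntrywiseDerivAt_PT_self (hΛ r) (h𝔄 r)) s 0
  refine ⟨hconj, ?_⟩
  rw [← Matrix.mul_assoc, trace_mul_cycle, hconj, trace_PT_self, hnorm]
  norm_num

end
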